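/- Amendment guarantees projectability: for every set of procedure definitions D, list of processes ps, and choreography C, the amended choreography amend D ps C is projectable (relative to the amended procedure definitions amend_D D ps) on every process in ps. -/

import Mathlib

namespace CC

abbrev Pid := ℕ
abbrev Var := ℕ
abbrev Val := ℕ
abbrev RecVar := ℕ

inductive Label | left | right
deriving Repr

inductive Expr | zero | var (x : Var) | succ (x : Var)
deriving Repr

inductive BExpr | eq (x y : Var)
deriving Repr

/-- Behaviours of the process calculus SP. -/
inductive Behaviour
| send (p : Pid) (e : Expr) (B : Behaviour)
| recv (p : Pid) (x : Var) (B : Behaviour)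
| sel (p : Pid) (l : Label) (B : Behaviour)
| branch (p : Pid) (mL mR : Option Behaviour)
| cond (b : BExpr) (B1 B2 : Behaviour)
| call (X : RecVar)
| nil
deriving Repr

mutual
/-- The merge relation on behaviours. -/
inductive Merge : Behaviour → Behaviour → Behaviour → Prop
| nil : Merge .nil .nil .nil
| call (X) : Merge (.call X) (.call X) (.call X)
| send {B1 B2 B p e} : Merge B1 B2 B → Merge (.send p e B1) (.send p e B2) (.send p e B)
| recv {B1 B2 B p x} : Merge B1 B2 B → Merge (.recv p x B1) (.recv p x B2) (.recv p x B)
| sel {B1 B2 B p l} : Merge B1 B2 B → Merge (.sel p l B1) (.sel p l B2) (.sel p l B)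
| cond {b Bt1 Bt2 Bt Be1 Be2 Be} : Merge Bt1 Bt2 Bt → Merge Be1 Be2 Be →
    Merge (.cond b Bt1 Be1) (.cond b Bt2 Be2) (.cond b Bt Be)
| branch {p mL1 mL2 mL mR1 mR2 mR} : MergeO mL1 mL2 mL → MergeO mR1 mR2 mR →
    Merge (.branch p mL1 mR1) (.branch p mL2 mR2) (.branch p mL mR)

/-- Componentwise merge on optional behaviours. -/
inductive MergeO : Option Behaviour → Option Behaviour → Option Behaviour → Prop
| none : MergeO none none none
| someNone (B) : MergeO (some B) none (some B)
| noneSome (B) : MergeO none (some B) (some B)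
| someSome {B1 B2 B} : Merge B1 B2 B → MergeO (some B1) (some B2) (some B)
end

/-- Interactions. -/
inductive Eta
| com (p : Pid) (e : Expr) (q : Pid) (x : Var)
| sel (p q : Pid) (l : Label)
deriving Repr

/-- Choreographies of Core Choreographies. -/
inductive Chor
| seq (η : Eta) (C : Chor)
| cond (p : Pid) (b : BExpr) (C1 C2 : Chor)
| call (X : RecVar)
| nil
deriving Repr

/-- Sets of procedure definitions. -/
abbrev DefSet := RecVar → List Pid × Chor

def procsEta : Eta → Finset Pid
| .com p _ q _ => {p, q}
| .sel p q _ => {p, q}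

/-- The set of processes occurring in a choreography. -/
def procsC : Chor → Finset Pid
| .seq η C => procsEta η ∪ procsC C
| .cond p _ C1 C2 => insert p (procsC C1 ∪ procsC C2)
| .call _ => ∅
| .nil => ∅

def etaWF : Eta → Prop
| .com p _ q _ => p ≠ q
| .sel p q _ => p ≠ q

/-- Well-formed choreographies: no self-communications. -/
def Chor_WF : Chor → Prop
| .seq η C => etaWF η ∧ Chor_WF C
| .cond _ _ C1 C2 => Chor_WF C1 ∧ Chor_WF C2
| .call _ => True
| .nil => True

/-- Well-formed choreographic programs. -/
def Program_WF (D : DefSet) (C : Chor) : Prop :=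
  Chor_WF C ∧ ∀ X, Chor_WF (D X).2

/-- Behaviour projection. -/
inductive BProj (D : DefSet) : Chor → Pid → Behaviour → Prop
| send {p e q x C B} : BProj D C p B → BProj D (.seq (.com p e q x) C) p (.send q e B)
| recv {p e q x C B} : p ≠ q → BProj D C q B → BProj D (.seq (.com p e q x) C) q (.recv p x B)
| com {p e q x C r B} : p ≠ r → q ≠ r → BProj D C r B → BProj D (.seq (.com p e q x) C) r B
| pick {p q l C B} : BProj D C p B → BProj D (.seq (.sel p q l) C) p (.sel q l B)
| left {p q C B} : p ≠ q → BProj D C q B →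
    BProj D (.seq (.sel p q .left) C) q (.branch p (some B) none)
| right {p q C B} : p ≠ q → BProj D C q B →
    BProj D (.seq (.sel p q .right) C) q (.branch p none (some B))
| selSkip {p q l C r B} : p ≠ r → q ≠ r → BProj D C r B → BProj D (.seq (.sel p q l) C) r B
| condEval {p b C1 C2 B1 B2} : BProj D C1 p B1 → BProj D C2 p B2 →
    BProj D (.cond p b C1 C2) p (.cond b B1 B2)
| condMerge {p b C1 C2 r B1 B2 B} : p ≠ r → BProj D C1 r B1 → BProj D C2 r B2 →
    Merge B1 B2 B → BProj D (.cond p b C1 C2) r B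
| callIn {X r} : r ∈ (D X).1 → BProj D (.call X) r (.call X)
| callOut {X r} : r ∉ (D X).1 → BProj D (.call X) r .nil
| nil {r} : BProj D .nil r .nil

/-- Projectability of a choreography on a process. -/
def projectable_B (D : DefSet) (C : Chor) (p : Pid) : Prop := ∃ B, BProj D C p B

/-- Prepend a selection of label `l` from `p` to each process in `ps`. -/
def add_sels (p : Pid) (l : Label) (ps : List Pid) (C : Chor) : Chor :=
  ps.foldr (fun r acc => .seq (.sel p r l) acc) C

open Classical in
/-- The processes of `ps` that need to be informed of the outcome of the conditional. -/
noncomputable def up_list (D : DefSet) (p : Pid) (b : BExpr) (ps : List Pid)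
    (C1 C2 : Chor) : List Pid :=
  ps.filter fun r => decide (r ≠ p ∧ ¬ projectable_B D (.cond p b C1 C2) r)

/-- The amendment procedure. -/
noncomputable def amend (D : DefSet) (ps : List Pid) : Chor → Chor
| .seq η C => .seq η (amend D ps C)
| .cond p b C1 C2 =>
    let A1 := amend D ps C1
    let A2 := amend D ps C2
    let l := up_list D p b ps A1 A2
    .cond p b (add_sels p .left l A1) (add_sels p .right l A2)
| .call X => .call X
| .nil => .nil

/-- Amendment of a set of procedure definitions. -/
noncomputable def amend_D (D : DefSet) (ps : List Pid) : DefSet :=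
  fun X => ((D X).1, amend D ps (D X).2)

/-- Memory states. -/
abbrev State := Pid → Var → Val

def updState (s : State) (p : Pid) (x : Var) (v : Val) : State :=
  fun q y => if q = p ∧ y = x then v else s q y

def eval : Expr → State → Pid → Val
| .zero, _, _ => 0
| .var x, s, p => s p x
| .succ x, s, p => s p x + 1

def beval : BExpr → State → Pid → Bool
| .eq x y, s, p => s p x == s p y

/-- Transition labels. -/
inductive TLabel
| com (p : Pid) (v : Val) (q : Pid)
| sel (p q : Pid) (l : Label)
| tau (p : Pid)
deriving Repr

def tlProcs : TLabel → Finset Pid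
| .com p _ q => {p, q}
| .sel p q _ => {p, q}
| .tau p => {p}

/-- Labelled transition semantics of choreographic configurations. -/
inductive Step (D : DefSet) : Chor → State → TLabel → Chor → State → Prop
| com {p e q x C s} :
    Step D (.seq (.com p e q x) C) s (.com p (eval e s p) q) C (updState s q x (eval e s p))
| sel {p q l C s} : Step D (.seq (.sel p q l) C) s (.sel p q l) C s
| thenB {p b C1 C2 s} : beval b s p = true → Step D (.cond p b C1 C2) s (.tau p) C1 s
| elseB {p b C1 C2 s} : beval b s p = false → Step D (.cond p b C1 C2) s (.tau p) C2 s
| call {X p s} : p ∈ (D X).1 → Step D (.call X) s (.tau p) (D X).2 s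
| delayEta {η C s t C' s'} : Disjoint (procsEta η) (tlProcs t) →
    Step D C s t C' s' → Step D (.seq η C) s t (.seq η C') s'
| delayCond {p b C1 C2 s t C1' C2' s'} : p ∉ tlProcs t →
    Step D C1 s t C1' s' → Step D C2 s t C2' s' →
    Step D (.cond p b C1 C2) s t (.cond p b C1' C2') s'

/-- Reflexive-transitive closure of the transition relation. -/
inductive StepMany (D : DefSet) : Chor → State → List TLabel → Chor → State → Prop
| refl {C s} : StepMany D C s [] C s
| step {C s t C' s' tl C'' s''} : Step D C s t C' s' → StepMany D C' s' tl C'' s'' →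
    StepMany D C s (t :: tl) C'' s''

/-- Selection expansion of lists of transition labels. -/
inductive SelExp : List TLabel → List TLabel → Prop
| base {tl tl'} : tl.Perm tl' → SelExp tl tl'
| extra {p q l tl tl' tl''} : SelExp tl tl' → (TLabel.sel p q l :: tl').Perm tl'' →
    SelExp tl tl''

/-- A configuration is stuck when it admits no transition. -/
def Stuck (D : DefSet) (C : Chor) (s : State) : Prop :=
  ∀ t C' s', ¬ Step D C s t C' s'

/-- Termination: there is no infinite execution from the configuration. -/
def Terminates (D : DefSet) (C : Chor) (s : State) : Prop :=
  ¬ ∃ f : ℕ → Chor × State × TLabel,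
      (f 0).1 = C ∧ (f 0).2.1 = s ∧
      ∀ n, Step D (f n).1 (f n).2.1 (f n).2.2 (f (n+1)).1 (f (n+1)).2.1

/-- `(D, C)` implements the partial function `f` with input processes `ps`
(storing the inputs in variable `0`) and output process `q`. -/
def implements (D : DefSet) (C : Chor) {m : ℕ} (f : (Fin m → ℕ) → Part ℕ)
    (ps : Fin m → Pid) (q : Pid) : Prop :=
  ∀ (s : State) (n : Fin m → ℕ), (∀ i, s (ps i) 0 = n i) →
    (∀ v ∈ f n, Terminates D C s ∧
      ∀ tl C' s', StepMany D C s tl C' s' → Stuck D C' s' → s' q 0 = v) ∧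
    (¬ (f n).Dom → ¬ ∃ tl C' s', StepMany D C s tl C' s' ∧ Stuck D C' s')

/-- `ps` covers all processes used by the program `(D, C)`. -/
def CoversProcs (D : DefSet) (C : Chor) (ps : List Pid) : Prop :=
  (∀ r ∈ procsC C, r ∈ ps) ∧ ∀ X, ∀ r ∈ procsC (D X).2, r ∈ ps

end CC

/-!
Induction on the choreography. An interaction or selection prefix never obstructs projection, and
neither do the selections that amendment inserts, so only conditionals `If p.b Then C1 Else C2` need
an argument, for a process `r ≠ p`. If `r` is in the `up_list`, the inserted selections turn its
projections of the two branches into `p&{left : B1}` and `p&{right : B2}`, which always merge. If it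
is not, the conditional was already projectable on `r` and the selections pass over `r`. Projection
depends on the procedure definitions only through their process lists, which `amend_D` keeps.
-/

namespace CC

theorem BProj.of_procs_eq {D D' : DefSet} (hD : ∀ X, (D X).1 = (D' X).1)
    {C : Chor} {r : Pid} {B : Behaviour} (h : BProj D C r B) : BProj D' C r B := by
  induction h with
  | send _ ih => exact .send ih
  | recv hpq _ ih => exact .recv hpq ih
  | com hpr hqr _ ih => exact .com hpr hqr ih
  | pick _ ih => exact .pick ih
  | left hpq _ ih => exact .left hpq ih
  | right hpq _ ih => exact .right hpq ih
  | selSkip hpr hqr _ ih => exact .selSkip hpr hqr ih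
  | condEval _ _ ih1 ih2 => exact .condEval ih1 ih2
  | condMerge hpr _ _ hM ih1 ih2 => exact .condMerge hpr ih1 ih2 hM
  | callIn hr => exact .callIn (hD _ ▸ hr)
  | callOut hr => exact .callOut (hD _ ▸ hr)
  | nil => exact .nil

def offer (p : Pid) : Label → Behaviour → Behaviour
| .left, B => .branch p (some B) none
| .right, B => .branch p none (some B)

theorem BProj.offer {D : DefSet} {p q : Pid} {l : Label} {C : Chor} {B : Behaviour}
    (hpq : p ≠ q) (h : BProj D C q B) : BProj D (.seq (.sel p q l) C) q (offer p l B) := by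
  cases l
  exacts [.left hpq h, .right hpq h]

theorem merge_offer_left_right (p : Pid) (B1 B2 : Behaviour) :
    Merge (offer p .left B1) (offer p .right B2) (.branch p (some B1) (some B2)) :=
  .branch (.someNone B1) (.noneSome B2)

theorem projectable_B.seq {D : DefSet} {C : Chor} {r : Pid} (h : projectable_B D C r) (η : Eta) :
    projectable_B D (.seq η C) r := by
  obtain ⟨B, hB⟩ := h
  cases η with
  | com p e q x =>
    by_cases hp : r = p
    · subst hp; exact ⟨_, .send hB⟩
    by_cases hq : r = q
    · subst hq; exact ⟨_, .recv (Ne.symm hp) hB⟩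
    exact ⟨_, .com (Ne.symm hp) (Ne.symm hq) hB⟩
  | sel p q l =>
    by_cases hp : r = p
    · subst hp; exact ⟨_, .pick hB⟩
    by_cases hq : r = q
    · subst hq; exact ⟨_, .offer (Ne.symm hp) hB⟩
    exact ⟨_, .selSkip (Ne.symm hp) (Ne.symm hq) hB⟩

theorem projectable_B.add_sels {D : DefSet} {C : Chor} {r : Pid} (h : projectable_B D C r)
    (p : Pid) (l : Label) (ls : List Pid) : projectable_B D (CC.add_sels p l ls C) r := by
  induction ls with
  | nil => exact h
  | cons q ls ih => exact ih.seq _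

theorem projectable_B_call (D : DefSet) (X : RecVar) (r : Pid) :
    projectable_B D (.call X) r := by
  by_cases h : r ∈ (D X).1
  exacts [⟨_, .callIn h⟩, ⟨_, .callOut h⟩]

theorem BProj.add_sels_of_not_mem {D : DefSet} {C : Chor} {p r : Pid} {l : Label}
    {ls : List Pid} {B : Behaviour} (hpr : p ≠ r) (hr : r ∉ ls) (h : BProj D C r B) :
    BProj D (add_sels p l ls C) r B := by
  induction ls with
  | nil => exact h
  | cons q ls ih =>
    rw [List.mem_cons, not_or] at hr
    exact .selSkip hpr (Ne.symm hr.1) (ih hr.2)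

theorem projectable_B.exists_offer_add_sels_of_mem {D : DefSet} {C : Chor} {p r : Pid}
    {ls : List Pid} (h : projectable_B D C r) (l : Label) (hpr : p ≠ r) (hr : r ∈ ls) :
    ∃ B, BProj D (CC.add_sels p l ls C) r (offer p l B) := by
  induction ls with
  | nil => cases hr
  | cons q ls ih =>
    by_cases hq : q = r
    · subst hq
      obtain ⟨B, hB⟩ := h.add_sels p l ls
      exact ⟨B, .offer hpr hB⟩
    · obtain ⟨B, hB⟩ := ih ((List.mem_cons.1 hr).resolve_left (Ne.symm hq))
      exact ⟨B, .selSkip hpr hq hB⟩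

theorem projectable_B_of_not_mem_up_list {D : DefSet} {p : Pid} {b : BExpr} {ps : List Pid}
    {C1 C2 : Chor} {r : Pid} (hr : r ∈ ps) (hrp : r ≠ p) (hm : r ∉ up_list D p b ps C1 C2) :
    projectable_B D (.cond p b C1 C2) r := by
  by_contra hc
  exact hm (List.mem_filter.2 ⟨hr, by simp [hrp, hc]⟩)

theorem BProj.cond_add_sels_of_not_mem {D : DefSet} {p : Pid} {b : BExpr} {C1 C2 : Chor}
    {r : Pid} {ls : List Pid} {B : Behaviour} (hpr : p ≠ r) (hr : r ∉ ls)
    (h : BProj D (.cond p b C1 C2) r B) :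
    BProj D (.cond p b (add_sels p .left ls C1) (add_sels p .right ls C2)) r B := by
  cases h with
  | condEval => exact absurd rfl hpr
  | condMerge _ h1 h2 hM =>
    exact .condMerge hpr (h1.add_sels_of_not_mem hpr hr) (h2.add_sels_of_not_mem hpr hr) hM

/-- The amendment step at a conditional, for a `D'` with the same process lists as `D`. -/
theorem projectable_B_cond_add_sels_up_list {D D' : DefSet} (hD : ∀ X, (D X).1 = (D' X).1)
    (p : Pid) (b : BExpr) {ps : List Pid} {C1 C2 : Chor} {r : Pid} (hr : r ∈ ps)
    (h1 : projectable_B D' C1 r) (h2 : projectable_B D' C2 r) :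
    let L := up_list D p b ps C1 C2
    projectable_B D' (.cond p b (add_sels p .left L C1) (add_sels p .right L C2)) r := by
  intro L
  by_cases hrp : r = p
  · subst hrp
    obtain ⟨B1, hB1⟩ := h1.add_sels r .left L
    obtain ⟨B2, hB2⟩ := h2.add_sels r .right L
    exact ⟨_, .condEval hB1 hB2⟩
  have hpr : p ≠ r := Ne.symm hrp
  by_cases hm : r ∈ L
  · obtain ⟨B1, hB1⟩ := h1.exists_offer_add_sels_of_mem .left hpr hm
    obtain ⟨B2, hB2⟩ := h2.exists_offer_add_sels_of_mem .right hpr hm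
    exact ⟨_, .condMerge hpr hB1 hB2 (merge_offer_left_right p B1 B2)⟩
  · obtain ⟨B, hB⟩ := projectable_B_of_not_mem_up_list hr hrp hm
    exact ⟨B, (hB.of_procs_eq hD).cond_add_sels_of_not_mem hpr hm⟩

end CC

open CC in
theorem amend_projectable_C (D : CC.DefSet) (ps : List CC.Pid) (C : CC.Chor) :
    ∀ r ∈ ps, ∃ B, BProj (amend_D D ps) (amend D ps C) r B := by
  have hD : ∀ X, (D X).1 = (amend_D D ps X).1 := fun _ => rfl
  induction C with
  | seq η C ih => exact fun r hr => projectable_B.seq (ih r hr) η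
  | cond p b C1 C2 ih1 ih2 =>
    exact fun r hr => projectable_B_cond_add_sels_up_list hD p b hr (ih1 r hr) (ih2 r hr)
  | call X => exact fun r _ => projectable_B_call _ X r
  | nil => exact fun _ _ => ⟨_, .nil⟩
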